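/- arXiv:1811.07834 — 2 statements merged into one kernel-verified Lean document; each statement's English description precedes it below -/
import Mathlib

section
/- (Lemma 1, Dense Sampling). Let K ⊆ ℝⁿ be compact with positive Lebesgue measure, and let μ be the uniform probability measure on K, i.e. the restriction of Lebesgue measure to K normalized to total mass 1. Let (X_k)_{k≥1} be an i.i.d. sequence of random vectors with law μ on some probability space. Let Ω ⊆ K be a Borel set with μ(Ω) > 0 and let ε > 0. Then the conditional probability that X_k lies within distance ε of an earlier sample landing in Ω, given that X_k ∈ Ω, tends to 1: lim_{k→∞} P(∃ j < k, X_j ∈ Ω ∧ ‖X_k − X_j‖ < ε | X_k ∈ Ω) = 1. -/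
/-!
Cover `Ω'` by finitely many balls of radius `ε / 2`, which is possible because `Ω' ⊆ K` is totally
bounded. If `X k ∈ Ω'` has no earlier sample of `Ω'` within distance `ε`, then `X k` is the first
sample to hit its cell `Ω' ∩ ball c (ε / 2)`; by independence this has probability
`μ cell * (1 - μ cell) ^ k`. Summing over the cells, `P (X k ∈ Ω', no close earlier sample) → 0`,
and dividing by `P (X k ∈ Ω') = μ Ω' > 0` gives the limit `1`.
-/

open Set MeasureTheory ProbabilityTheory Filter Metric
open scoped ENNReal Topology

section Sampling

variable {Θ α : Type*} {mΘ : MeasurableSpace Θ} [MeasurableSpace α] {P : Measure Θ}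
  [IsProbabilityMeasure P] {μ : Measure α} {X : ℕ → Θ → α}

lemma isProbabilityMeasure_of_map_eq {Y : Θ → α} (hY : Measurable Y) (h : P.map Y = μ) :
    IsProbabilityMeasure μ :=
  h ▸ Measure.isProbabilityMeasure_map hY.aemeasurable

lemma ProbabilityTheory.iIndepFun.measure_mem_and_forall_lt_notMem
    (hmeas : ∀ k, Measurable (X k)) (hindep : iIndepFun X P) (hlaw : ∀ k, P.map (X k) = μ)
    {A : Set α} (hA : MeasurableSet A) (k : ℕ) :
    P {θ | X k θ ∈ A ∧ ∀ j < k, X j θ ∉ A} = μ A * (1 - μ A) ^ k := by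
  have := isProbabilityMeasure_of_map_eq (hmeas 0) (hlaw 0)
  have hlawA : ∀ j {B : Set α}, MeasurableSet B → P (X j ⁻¹' B) = μ B := fun j B hB => by
    rw [← hlaw j, Measure.map_apply (hmeas j) hB]
  let sets : ℕ → Set α := fun j => if j = k then A else Aᶜ
  have hsets : ∀ j, MeasurableSet (sets j) := fun j => by
    by_cases hj : j = k <;> simp [sets, hj, hA]
  have hevent : {θ | X k θ ∈ A ∧ ∀ j < k, X j θ ∉ A} =
      ⋂ j ∈ Finset.range (k + 1), X j ⁻¹' sets j := by
    ext θ
    simp only [Set.mem_ofPred_eq, mem_iInter, Finset.mem_range, Set.mem_preimage]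
    refine ⟨fun ⟨hk, hlt⟩ j hj => ?_, fun h => ⟨by simpa [sets] using h k (by omega),
      fun j hj => by simpa [sets, hj.ne] using h j (by omega)⟩⟩
    rcases Nat.lt_succ_iff_lt_or_eq.mp hj with hj | rfl
    · simpa [sets, hj.ne] using hlt j hj
    · simpa [sets] using hk
  have hfactor : ∀ j ∈ Finset.range k, P (X j ⁻¹' sets j) = 1 - μ A := fun j hj => by
    simp only [sets, if_neg (Finset.mem_range.mp hj).ne]
    rw [hlawA j hA.compl, prob_compl_eq_one_sub hA]
  rw [hevent, hindep.measure_inter_preimage_eq_mul _ fun j _ => hsets j, Finset.prod_range_succ,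
    Finset.prod_congr rfl hfactor, Finset.prod_const, Finset.card_range, mul_comm]
  simp [sets, hlawA k hA]

lemma forall_lt_notMem_inter_ball_of_not_exists_dist_lt {β : Type*} [PseudoMetricSpace β]
    {x : ℕ → β} {s : Set β} {c : β} {ε : ℝ} {k : ℕ} (hk : x k ∈ ball c (ε / 2))
    (hfar : ¬∃ j < k, x j ∈ s ∧ dist (x k) (x j) < ε) :
    ∀ j < k, x j ∉ s ∩ ball c (ε / 2) := by
  rintro j hj ⟨hjs, hjc⟩
  refine hfar ⟨j, hj, hjs, ?_⟩
  calc dist (x k) (x j) ≤ dist (x k) c + dist (x j) c := dist_triangle_right _ _ _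
    _ < ε / 2 + ε / 2 := add_lt_add (mem_ball.mp hk) (mem_ball.mp hjc)
    _ = ε := add_halves ε

lemma ENNReal.tendsto_mul_one_sub_pow_atTop_nhds_zero {a : ℝ≥0∞} (ha : a ≠ ∞) :
    Tendsto (fun k : ℕ => a * (1 - a) ^ k) atTop (𝓝 0) := by
  rcases eq_or_ne a 0 with rfl | ha0
  · simp
  · have hlt : 1 - a < 1 := ENNReal.sub_lt_self ENNReal.one_ne_top one_ne_zero ha0
    simpa using ENNReal.Tendsto.const_mul (ENNReal.tendsto_pow_atTop_nhds_zero_of_lt_one hlt)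
      (Or.inr ha)

lemma tendsto_measure_mem_diff_exists_lt_dist_lt [PseudoMetricSpace α] [OpensMeasurableSpace α]
    (hmeas : ∀ k, Measurable (X k)) (hindep : iIndepFun X P) (hlaw : ∀ k, P.map (X k) = μ)
    {s : Set α} (hs : TotallyBounded s) (hsm : MeasurableSet s) {ε : ℝ} (hε : 0 < ε) :
    Tendsto (fun k => P ({θ | X k θ ∈ s} \
      {θ | ∃ j < k, X j θ ∈ s ∧ dist (X k θ) (X j θ) < ε})) atTop (𝓝 0) := by
  have := isProbabilityMeasure_of_map_eq (hmeas 0) (hlaw 0)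
  obtain ⟨t, ht, hcover⟩ := totallyBounded_iff.mp hs (ε / 2) (half_pos hε)
  let cell : α → Set α := fun c => s ∩ ball c (ε / 2)
  have hbound : ∀ k, P ({θ | X k θ ∈ s} \
      {θ | ∃ j < k, X j θ ∈ s ∧ dist (X k θ) (X j θ) < ε}) ≤
      ∑ c ∈ ht.toFinset, μ (cell c) * (1 - μ (cell c)) ^ k := by
    intro k
    calc _ ≤ P (⋃ c ∈ ht.toFinset, {θ | X k θ ∈ cell c ∧ ∀ j < k, X j θ ∉ cell c}) := by
          refine measure_mono fun θ ⟨hks, hfar⟩ => ?_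
          obtain ⟨c, hct, hkc⟩ := mem_iUnion₂.mp (hcover hks)
          exact mem_iUnion₂.mpr ⟨c, ht.mem_toFinset.mpr hct, ⟨hks, hkc⟩,
            forall_lt_notMem_inter_ball_of_not_exists_dist_lt (x := fun j => X j θ) hkc hfar⟩
      _ ≤ _ := measure_biUnion_finset_le _ _
      _ = _ := Finset.sum_congr rfl fun c _ =>
          hindep.measure_mem_and_forall_lt_notMem hmeas hlaw (hsm.inter measurableSet_ball) k
  have hsum : Tendsto (fun k => ∑ c ∈ ht.toFinset, μ (cell c) * (1 - μ (cell c)) ^ k) atTop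
      (𝓝 0) := by
    simpa using tendsto_finsetSum ht.toFinset fun c _ =>
      ENNReal.tendsto_mul_one_sub_pow_atTop_nhds_zero (measure_ne_top μ (cell c))
  exact tendsto_of_tendsto_of_tendsto_of_le_of_le tendsto_const_nhds hsum (fun _ => zero_le)
    hbound

end Sampling

lemma one_sub_inv_mul_measure_diff_le_cond_apply {Θ : Type*} {mΘ : MeasurableSpace Θ}
    (P : Measure Θ) {B : Set Θ} (hB : MeasurableSet B) (hPB : P B ≠ 0) (hPB' : P B ≠ ∞)
    (S : Set Θ) :
    1 - (P B)⁻¹ * P (B \ S) ≤ P[|B] S := by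
  have huniv : P[|B] univ = 1 := by
    rw [cond_apply hB, inter_univ, ENNReal.inv_mul_cancel hPB hPB']
  rw [tsub_le_iff_right, ← huniv, sdiff_eq, ← cond_apply hB]
  exact measure_univ_le_add_compl S

theorem dense_sampling_general {n : ℕ}
    (K : Set (EuclideanSpace ℝ (Fin n))) (hK : IsCompact K)
    (μ : Measure (EuclideanSpace ℝ (Fin n)))
    {Θ : Type*} {mΘ : MeasurableSpace Θ} (P : Measure Θ) [IsProbabilityMeasure P]
    (X : ℕ → Θ → EuclideanSpace ℝ (Fin n))
    (hmeas : ∀ k, Measurable (X k))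
    (hindep : iIndepFun X P)
    (hlaw : ∀ k, Measure.map (X k) P = μ)
    (Ω' : Set (EuclideanSpace ℝ (Fin n))) (hΩ'meas : MeasurableSet Ω') (hΩ'sub : Ω' ⊆ K)
    (hΩ'pos : 0 < μ Ω')
    (ε : ℝ) (hε : 0 < ε) :
    Filter.Tendsto
      (fun k : ℕ =>
        P[|{θ | X k θ ∈ Ω'}] {θ | ∃ j < k, X j θ ∈ Ω' ∧ ‖X k θ - X j θ‖ < ε})
      Filter.atTop (nhds 1) := by
  have hhit : ∀ k, P {θ | X k θ ∈ Ω'} = μ Ω' := fun k => by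
    rw [← hlaw k, Measure.map_apply (hmeas k) hΩ'meas]; rfl
  simp_rw [← dist_eq_norm]
  have hfar := tendsto_measure_mem_diff_exists_lt_dist_lt hmeas hindep hlaw
    (hK.totallyBounded.subset hΩ'sub) hΩ'meas hε
  have hlower : Tendsto (fun k => 1 - (μ Ω')⁻¹ * P ({θ | X k θ ∈ Ω'} \
      {θ | ∃ j < k, X j θ ∈ Ω' ∧ dist (X k θ) (X j θ) < ε})) atTop (𝓝 1) := by
    simpa using ENNReal.Tendsto.sub tendsto_const_nhds
      (ENNReal.Tendsto.const_mul hfar (Or.inr (ENNReal.inv_ne_top.mpr hΩ'pos.ne')))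
      (Or.inl ENNReal.one_ne_top)
  refine tendsto_of_tendsto_of_tendsto_of_le_of_le hlower tendsto_const_nhds (fun k => ?_)
    fun _ => prob_le_one
  rw [← hhit k]
  exact one_sub_inv_mul_measure_diff_le_cond_apply P (hmeas k hΩ'meas) (hhit k ▸ hΩ'pos.ne')
    (measure_ne_top P _) _

/-- **Lemma 1 (Dense Sampling).** Let `μ` be the uniform probability measure on a compact set
`K ⊆ ℝⁿ` of positive Lebesgue measure, let `(X k)` be i.i.d. samples with law `μ`, and let
`Ω' ⊆ K` be Borel with `μ Ω' > 0`. Then the conditional probability that `X k` lies within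
distance `ε` of some earlier sample landing in `Ω'`, given `X k ∈ Ω'`, tends to `1`. -/
theorem dense_sampling {n : ℕ}
    (K : Set (EuclideanSpace ℝ (Fin n))) (hK : IsCompact K) (hKpos : 0 < volume K)
    (μ : Measure (EuclideanSpace ℝ (Fin n)))
    (hμ : μ = (volume K)⁻¹ • volume.restrict K)
    {Θ : Type*} {mΘ : MeasurableSpace Θ} (P : Measure Θ) [IsProbabilityMeasure P]
    (X : ℕ → Θ → EuclideanSpace ℝ (Fin n))
    (hmeas : ∀ k, Measurable (X k))
    (hindep : iIndepFun X P)
    (hlaw : ∀ k, Measure.map (X k) P = μ)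
    (Ω' : Set (EuclideanSpace ℝ (Fin n))) (hΩ'meas : MeasurableSet Ω') (hΩ'sub : Ω' ⊆ K)
    (hΩ'pos : 0 < μ Ω')
    (ε : ℝ) (hε : 0 < ε) :
    Filter.Tendsto
      (fun k : ℕ =>
        P[|{θ | X k θ ∈ Ω'}] {θ | ∃ j < k, X j θ ∈ Ω' ∧ ‖X k θ - X j θ‖ < ε})
      Filter.atTop (nhds 1) :=
  dense_sampling_general K hK μ (mΘ := mΘ) P X hmeas hindep hlaw Ω' hΩ'meas hΩ'sub hΩ'pos ε hε
end

section
/- (Ancestor consolidation: the transitive closure of the safe-reachability relation collapses). Fix a free set F ⊆ ℝ^d and define the relation R on ℝⁿ by R p q ↔ q ∈ Ω_F({p}, F). If p ∈ ℝⁿ satisfies φ_E(p) ⊆ F and q is related to p by the reflexive–transitive closure of R (i.e. Relation.ReflTransGen R p q), then q ∈ Ω_F({p}, F). Hence whenever a graph vertex is added to the backward reachable graph, all of its ancestors along safe edges also belong to the safe reachable set. -/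
/-!
Safe reachability from a single state is reflexive as soon as that state's footprint is free
(stay put under any admissible control) and transitive (run one trajectory, then the other shifted
in time; the junction time joins the finite set where the derivative may fail), so it already
contains its own reflexive–transitive closure.
-/

open Set MeasureTheory ProbabilityTheory Filter Pointwise

noncomputable section

/-- The robust footprint of a planning state `p`: the projection of `p` onto location
coordinates, Minkowski-summed with the (enlarged) vehicle footprint `E`. -/
def robustFootprint {n d : ℕ}
    (proj : EuclideanSpace ℝ (Fin n) →ₗ[ℝ] EuclideanSpace ℝ (Fin d))
    (E : Set (EuclideanSpace ℝ (Fin d))) (p : EuclideanSpace ℝ (Fin n)) :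
    Set (EuclideanSpace ℝ (Fin d)) :=
  {proj p} + E

/-- An admissible trajectory of the planning dynamics `f` with control constraint set `C`,
from state `p`, over the time interval `[t₀, t₁]`. -/
def IsAdmissibleOn {n m : ℕ}
    (f : EuclideanSpace ℝ (Fin n) → EuclideanSpace ℝ (Fin m) → EuclideanSpace ℝ (Fin n))
    (C : Set (EuclideanSpace ℝ (Fin m))) (p : EuclideanSpace ℝ (Fin n)) (t₀ t₁ : ℝ)
    (ξ : ℝ → EuclideanSpace ℝ (Fin n)) : Prop :=
  Continuous ξ ∧ ξ t₀ = p ∧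
    ∃ c : ℝ → EuclideanSpace ℝ (Fin m), (∀ τ, c τ ∈ C) ∧
      ∃ S : Set ℝ, S.Finite ∧ ∀ τ ∈ Icc t₀ t₁ \ S, HasDerivAt ξ (f (ξ τ) (c τ)) τ

/-- A trajectory is safe with respect to the free set `F` on `[t₀, t₁]` if its robust
footprint stays inside `F` throughout. -/
def IsSafeOn {n d : ℕ}
    (proj : EuclideanSpace ℝ (Fin n) →ₗ[ℝ] EuclideanSpace ℝ (Fin d))
    (E F : Set (EuclideanSpace ℝ (Fin d))) (t₀ t₁ : ℝ)
    (ξ : ℝ → EuclideanSpace ℝ (Fin n)) : Prop :=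
  ∀ τ ∈ Icc t₀ t₁, robustFootprint proj E (ξ τ) ⊆ F

/-- The safe forward reachable set `Ω_F(L, F)`. -/
def OmegaF {n m d : ℕ}
    (f : EuclideanSpace ℝ (Fin n) → EuclideanSpace ℝ (Fin m) → EuclideanSpace ℝ (Fin n))
    (C : Set (EuclideanSpace ℝ (Fin m)))
    (proj : EuclideanSpace ℝ (Fin n) →ₗ[ℝ] EuclideanSpace ℝ (Fin d))
    (E : Set (EuclideanSpace ℝ (Fin d)))
    (L : Set (EuclideanSpace ℝ (Fin n))) (F : Set (EuclideanSpace ℝ (Fin d))) :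
    Set (EuclideanSpace ℝ (Fin n)) :=
  {p' | ∃ p ∈ L, ∃ T, 0 ≤ T ∧ ∃ ξ : ℝ → EuclideanSpace ℝ (Fin n),
    IsAdmissibleOn f C p 0 T ξ ∧ IsSafeOn proj E F 0 T ξ ∧ ξ T = p'}

/-- The safe backward reachable set `Ω_B(L, F)`. -/
def OmegaB {n m d : ℕ}
    (f : EuclideanSpace ℝ (Fin n) → EuclideanSpace ℝ (Fin m) → EuclideanSpace ℝ (Fin n))
    (C : Set (EuclideanSpace ℝ (Fin m)))
    (proj : EuclideanSpace ℝ (Fin n) →ₗ[ℝ] EuclideanSpace ℝ (Fin d))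
    (E : Set (EuclideanSpace ℝ (Fin d)))
    (L : Set (EuclideanSpace ℝ (Fin n))) (F : Set (EuclideanSpace ℝ (Fin d))) :
    Set (EuclideanSpace ℝ (Fin n)) :=
  {p' | ∃ T, 0 ≤ T ∧ ∃ ξ : ℝ → EuclideanSpace ℝ (Fin n),
    IsAdmissibleOn f C p' 0 T ξ ∧ IsSafeOn proj E F 0 T ξ ∧ ξ T ∈ L}

def concatAt {X : Type*} (T : ℝ) (ξ₁ ξ₂ : ℝ → X) : ℝ → X :=
  fun τ => if τ ≤ T then ξ₁ τ else ξ₂ (τ - T)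

section concatAt

variable {X : Type*} {T : ℝ} {ξ₁ ξ₂ : ℝ → X}

lemma concatAt_of_le {τ : ℝ} (hτ : τ ≤ T) : concatAt T ξ₁ ξ₂ τ = ξ₁ τ := if_pos hτ

lemma concatAt_of_lt {τ : ℝ} (hτ : T < τ) : concatAt T ξ₁ ξ₂ τ = ξ₂ (τ - T) :=
  if_neg hτ.not_ge

lemma concatAt_add (hjoin : ξ₁ T = ξ₂ 0) {s : ℝ} (hs : 0 ≤ s) :
    concatAt T ξ₁ ξ₂ (T + s) = ξ₂ s := by
  rcases hs.eq_or_lt with rfl | hs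
  · rw [add_zero, concatAt_of_le le_rfl, hjoin]
  · rw [concatAt_of_lt (lt_add_of_pos_right T hs), add_sub_cancel_left]

lemma continuous_concatAt [TopologicalSpace X] (h₁ : Continuous ξ₁) (h₂ : Continuous ξ₂)
    (hjoin : ξ₁ T = ξ₂ 0) : Continuous (concatAt T ξ₁ ξ₂) :=
  h₁.if_le (h₂.comp (continuous_sub_right T)) continuous_id continuous_const
    fun τ hτ => by simp [hτ, hjoin]

variable {E : Type*} [NormedAddCommGroup E] [NormedSpace ℝ E] {ξ₁ ξ₂ : ℝ → E} {v : E} {τ : ℝ}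

lemma hasDerivAt_concatAt_of_lt (hτ : τ < T) (h : HasDerivAt ξ₁ v τ) :
    HasDerivAt (concatAt T ξ₁ ξ₂) v τ :=
  h.congr_of_eventuallyEq <| eventually_of_mem (Iio_mem_nhds hτ) fun _ hx => concatAt_of_le hx.le

lemma hasDerivAt_concatAt_of_gt (hτ : T < τ) (h : HasDerivAt ξ₂ v (τ - T)) :
    HasDerivAt (concatAt T ξ₁ ξ₂) v τ :=
  (h.comp_sub_const τ T).congr_of_eventuallyEq <|
    eventually_of_mem (Ioi_mem_nhds hτ) fun _ hx => concatAt_of_lt hx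

end concatAt

section reachability

variable {n m d : ℕ}
  {f : EuclideanSpace ℝ (Fin n) → EuclideanSpace ℝ (Fin m) → EuclideanSpace ℝ (Fin n)}
  {C : Set (EuclideanSpace ℝ (Fin m))}
  {proj : EuclideanSpace ℝ (Fin n) →ₗ[ℝ] EuclideanSpace ℝ (Fin d)}
  {E F : Set (EuclideanSpace ℝ (Fin d))}

lemma isAdmissibleOn_const (hC : C.Nonempty) (p : EuclideanSpace ℝ (Fin n)) (t : ℝ) :
    IsAdmissibleOn f C p t t fun _ => p := by
  obtain ⟨c, hc⟩ := hC
  refine ⟨continuous_const, rfl, fun _ => c, fun _ => hc, {t}, finite_singleton t, ?_⟩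
  rintro τ ⟨hτ, hτt⟩
  exact absurd (le_antisymm hτ.2 hτ.1) hτt

lemma IsAdmissibleOn.concatAt {p : EuclideanSpace ℝ (Fin n)} {T₁ T₂ : ℝ}
    {ξ₁ ξ₂ : ℝ → EuclideanSpace ℝ (Fin n)} (hT₁ : 0 ≤ T₁)
    (h₁ : IsAdmissibleOn f C p 0 T₁ ξ₁) (h₂ : IsAdmissibleOn f C (ξ₁ T₁) 0 T₂ ξ₂) :
    IsAdmissibleOn f C p 0 (T₁ + T₂) (concatAt T₁ ξ₁ ξ₂) := by
  obtain ⟨hcont₁, hinit₁, c₁, hc₁, S₁, hS₁, hd₁⟩ := h₁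
  obtain ⟨hcont₂, hinit₂, c₂, hc₂, S₂, hS₂, hd₂⟩ := h₂
  refine ⟨continuous_concatAt hcont₁ hcont₂ hinit₂.symm, (concatAt_of_le hT₁).trans hinit₁,
    _root_.concatAt T₁ c₁ c₂, fun τ => by unfold _root_.concatAt; split_ifs <;> simp [hc₁, hc₂],
    S₁ ∪ (· + T₁) '' S₂ ∪ {T₁}, (hS₁.union (hS₂.image _)).union (finite_singleton T₁), ?_⟩
  rintro τ ⟨⟨h0, hτT⟩, hτS⟩
  simp only [mem_union, mem_singleton_iff, not_or] at hτS
  obtain ⟨⟨hτS₁, hτS₂⟩, hτT₁⟩ := hτS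
  rcases lt_or_gt_of_ne hτT₁ with hlt | hgt
  · rw [concatAt_of_le hlt.le, concatAt_of_le hlt.le]
    exact hasDerivAt_concatAt_of_lt hlt (hd₁ τ ⟨⟨h0, hlt.le⟩, hτS₁⟩)
  · rw [concatAt_of_lt hgt, concatAt_of_lt hgt]
    refine hasDerivAt_concatAt_of_gt hgt (hd₂ _ ⟨⟨by linarith, by linarith⟩, fun hS => ?_⟩)
    exact hτS₂ ⟨τ - T₁, hS, sub_add_cancel τ T₁⟩

lemma IsSafeOn.concatAt {T₁ T₂ : ℝ} {ξ₁ ξ₂ : ℝ → EuclideanSpace ℝ (Fin n)}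
    (h₁ : IsSafeOn proj E F 0 T₁ ξ₁) (h₂ : IsSafeOn proj E F 0 T₂ ξ₂) :
    IsSafeOn proj E F 0 (T₁ + T₂) (concatAt T₁ ξ₁ ξ₂) := by
  rintro τ ⟨h0, hτ⟩
  rcases le_or_gt τ T₁ with hle | hgt
  · rw [concatAt_of_le hle]
    exact h₁ τ ⟨h0, hle⟩
  · rw [concatAt_of_lt hgt]
    exact h₂ _ ⟨by linarith, by linarith⟩

lemma self_mem_omegaF_singleton (hC : C.Nonempty) {p : EuclideanSpace ℝ (Fin n)}
    (hp : robustFootprint proj E p ⊆ F) : p ∈ OmegaF f C proj E {p} F :=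
  ⟨p, rfl, 0, le_rfl, fun _ => p, isAdmissibleOn_const hC p 0, fun _ _ => hp, rfl⟩

lemma omegaF_singleton_trans {p q r : EuclideanSpace ℝ (Fin n)}
    (hq : q ∈ OmegaF f C proj E {p} F) (hr : r ∈ OmegaF f C proj E {q} F) :
    r ∈ OmegaF f C proj E {p} F := by
  obtain ⟨p, rfl, T₁, hT₁, ξ₁, hadm₁, hsafe₁, rfl⟩ := hq
  obtain ⟨_, rfl, T₂, hT₂, ξ₂, hadm₂, hsafe₂, rfl⟩ := hr
  exact ⟨p, rfl, T₁ + T₂, add_nonneg hT₁ hT₂, concatAt T₁ ξ₁ ξ₂, hadm₁.concatAt hT₁ hadm₂,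
    hsafe₁.concatAt hsafe₂, concatAt_add hadm₂.2.1.symm hT₂⟩

end reachability

/-- **Ancestor consolidation:** the reflexive–transitive closure of the safe-reachability
relation collapses: if `φ_E(p) ⊆ F` and `q` is reachable from `p` along a chain of safe
edges, then `q ∈ Ω_F({p}, F)`. -/
theorem ancestor_consolidation {n m d : ℕ}
    (f : EuclideanSpace ℝ (Fin n) → EuclideanSpace ℝ (Fin m) → EuclideanSpace ℝ (Fin n))
    (C : Set (EuclideanSpace ℝ (Fin m))) (hC : C.Nonempty)
    (proj : EuclideanSpace ℝ (Fin n) →ₗ[ℝ] EuclideanSpace ℝ (Fin d))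
    (E : Set (EuclideanSpace ℝ (Fin d)))
    (F : Set (EuclideanSpace ℝ (Fin d)))
    (R : EuclideanSpace ℝ (Fin n) → EuclideanSpace ℝ (Fin n) → Prop)
    (hR : ∀ p q, R p q ↔ q ∈ OmegaF f C proj E {p} F)
    (p q : EuclideanSpace ℝ (Fin n))
    (hp : robustFootprint proj E p ⊆ F)
    (hpq : Relation.ReflTransGen R p q) :
    q ∈ OmegaF f C proj E {p} F := by
  induction hpq with
  | refl => exact self_mem_omegaF_singleton hC hp
  | tail _ hqr ih => exact omegaF_singleton_trans ih ((hR _ _).mp hqr)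
end
end
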